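/- With δ = Σ_{i=1}^n t_i(t_i − 1) ∂/∂t_i, we have (δ + 1)(Σ_{j=1}^{n+1} tr(A_j A_{n+2})/(t_j − 1)) = θ_{n+3} d_{n+2} + θ_{n+2}(ρ + θ_{n+2}), where d_{n+2} is the (2,2)-entry of A_{n+2}. -/

import Mathlib

open Finset

noncomputable section

/-- Extend `t = (t₁, …, tₙ) : Fin n → ℂ` by the fixed points `t_{n+1} = 0` and
`t_{n+2} = 1` (0-based: indices `n` and `n+1` of `Fin (n+2)`). -/
def ext (n : ℕ) (t : Fin n → ℂ) (j : Fin (n + 2)) : ℂ :=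
  if h : (j : ℕ) < n then t ⟨j, h⟩ else if (j : ℕ) = n then 0 else 1

/-- Inclusion of indices `1, …, n` into `1, …, n+2` (0-based). -/
def inc (n : ℕ) : Fin n → Fin (n + 2) := Fin.castLE (by omega)

/-- The partial derivative `∂f/∂t_i` of a scalar function on `ℂⁿ`. -/
def pderiv (n : ℕ) (i : Fin n) (f : (Fin n → ℂ) → ℂ) (t : Fin n → ℂ) : ℂ :=
  fderiv ℂ f t (Pi.single i 1)

/-- `ρ = −(θ₁ + ⋯ + θ_{n+3})/2`. -/
def rho (n : ℕ) (θ : Fin (n + 3) → ℂ) : ℂ := -(∑ j, θ j) / 2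

/-- The constants `C_{ij} = −θ_iθ_j/2 + (θ_i² + θ_j²)/(2(n+1))
− (Σ_k θ_k²)/(2(n+1)(n+2))`. -/
def Cc (n : ℕ) (θ : Fin (n + 3) → ℂ) (i j : Fin (n + 2)) : ℂ :=
  -(θ (Fin.castSucc i) * θ (Fin.castSucc j)) / 2
    + (θ (Fin.castSucc i) ^ 2 + θ (Fin.castSucc j) ^ 2) / (2 * ((n : ℂ) + 1))
    - (∑ k, θ k ^ 2) / (2 * ((n : ℂ) + 1) * ((n : ℂ) + 2))

/-- `H̃_i = Σ_{1 ≤ j ≤ n+2, j ≠ i} tr(A_i A_j)/(t_i − t_j)`. -/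
def Htil (n : ℕ) (A : Fin (n + 2) → (Fin n → ℂ) → Matrix (Fin 2) (Fin 2) ℂ)
    (i : Fin n) (t : Fin n → ℂ) : ℂ :=
  ∑ j ∈ Finset.univ.filter (fun j => j ≠ inc n i),
    (A (inc n i) t * A j t).trace / (t i - ext n t j)


/-!
Write `M = A_{n+2}` and `F = Σ_{j ≤ n+1} tr(A_j M)/(t_j - 1)`. By cyclicity of the trace, the
Schlesinger equations give `∂_i (tr(A_j M)/(t_j - 1)) = tr([A_i, A_j] M)/((t_i - t_j)(t_i - 1))`
for `j ≠ i`, while `∂_i tr(A_i M) = -Σ_{k ≠ i} tr([A_i, A_k] M)/(t_i - t_k)`, whose `k = n+2` term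
vanishes. These cancel, leaving `∂_i F = -tr(A_i M)/(t_i - 1)²`, so that
`(δ + 1) F = -Σ_{j ≤ n+1} tr(A_j M) = tr(M²) - tr((Σ_j A_j) M)`. Finally `M` is `2 × 2` with
`det M = 0`, so `tr(M²) = (tr M)² = θ_{n+2}²`, and `Σ_j A_j = -diag(ρ, ρ + θ_{n+3})`.
-/

section PartialDerivative

variable {n : ℕ} {i : Fin n} {t : Fin n → ℂ}

theorem pderiv_fun_sum {ι : Type*} (u : Finset ι) {f : ι → (Fin n → ℂ) → ℂ}
    (hf : ∀ a ∈ u, DifferentiableAt ℂ (f a) t) :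
    pderiv n i (fun s => ∑ a ∈ u, f a s) t = ∑ a ∈ u, pderiv n i (f a) t := by
  simp [pderiv, fderiv_fun_sum hf]

theorem pderiv_fun_mul {f g : (Fin n → ℂ) → ℂ} (hf : DifferentiableAt ℂ f t)
    (hg : DifferentiableAt ℂ g t) :
    pderiv n i (fun s => f s * g s) t = pderiv n i f t * g t + f t * pderiv n i g t := by
  simp only [pderiv, fderiv_fun_mul hf hg, add_apply, smul_apply, smul_eq_mul]
  ring

theorem pderiv_fun_inv {g : (Fin n → ℂ) → ℂ} (hg : DifferentiableAt ℂ g t) (h0 : g t ≠ 0) :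
    pderiv n i (fun s => (g s)⁻¹) t = -pderiv n i g t / g t ^ 2 := by
  have hcomp : (fun s => (g s)⁻¹) = (fun x : ℂ => x⁻¹) ∘ g := rfl
  rw [pderiv, hcomp, fderiv_comp t (differentiableAt_inv h0) hg, fderiv_inv]
  simp only [ContinuousLinearMap.coe_comp, Function.comp_apply,
    ContinuousLinearMap.toSpanSingleton_apply, smul_eq_mul, pderiv]
  field_simp

theorem pderiv_fun_div {f g : (Fin n → ℂ) → ℂ} (hf : DifferentiableAt ℂ f t)
    (hg : DifferentiableAt ℂ g t) (h0 : g t ≠ 0) :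
    pderiv n i (fun s => f s / g s) t
      = (pderiv n i f t * g t - f t * pderiv n i g t) / g t ^ 2 := by
  simp only [div_eq_mul_inv]
  rw [pderiv_fun_mul (g := fun s => (g s)⁻¹) hf (hg.inv h0), pderiv_fun_inv hg h0]
  field_simp
  ring

theorem pderiv_sub_const {f : (Fin n → ℂ) → ℂ} (c : ℂ) :
    pderiv n i (fun s => f s - c) t = pderiv n i f t := by
  simp only [pderiv, fderiv_sub_const]

theorem pderiv_apply (q : Fin n) :
    pderiv n i (fun s => s q) t = if i = q then 1 else 0 := by
  have hproj : (fun s : Fin n → ℂ => s q) = ContinuousLinearMap.proj (R := ℂ) q := rfl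
  simp [pderiv, hproj, Pi.single_apply, eq_comm]

end PartialDerivative

section Coordinates

variable {n : ℕ}

theorem inc_eq_castSucc_castSucc (q : Fin n) : inc n q = q.castSucc.castSucc := rfl

@[simp]
theorem ext_castSucc_castSucc (t : Fin n → ℂ) (q : Fin n) :
    ext n t q.castSucc.castSucc = t q := by
  simp [_root_.ext]

@[simp]
theorem ext_inc (t : Fin n → ℂ) (q : Fin n) : ext n t (inc n q) = t q :=
  ext_castSucc_castSucc t q

@[simp]
theorem ext_castSucc_last (t : Fin n → ℂ) : ext n t (Fin.last n).castSucc = 0 := by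
  simp [_root_.ext]

@[simp]
theorem ext_last (t : Fin n → ℂ) : ext n t (Fin.last (n + 1)) = 1 := by
  simp [_root_.ext]

theorem last_ne_inc (i : Fin n) : Fin.last (n + 1) ≠ inc n i :=
  (Fin.castSucc_lt_last i.castSucc).ne'

theorem differentiable_ext (j : Fin (n + 2)) : Differentiable ℂ (fun s => ext n s j) := by
  induction j using Fin.lastCases with
  | last => simp
  | cast j =>
    induction j using Fin.lastCases with
    | last => simp
    | cast q => simpa using differentiable_apply (𝕜 := ℂ) q

theorem pderiv_ext (i : Fin n) (t : Fin n → ℂ) (j : Fin (n + 2)) :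
    pderiv n i (fun s => ext n s j) t = if j = inc n i then 1 else 0 := by
  induction j using Fin.lastCases with
  | last => simp [pderiv, last_ne_inc]
  | cast j =>
    induction j using Fin.lastCases with
    | last =>
      have hne : (Fin.last n).castSucc ≠ inc n i :=
        fun h => (Fin.castSucc_lt_last i).ne' (Fin.castSucc_injective _ h)
      simp [pderiv, hne]
    | cast q => simp [pderiv_apply, inc_eq_castSucc_castSucc, eq_comm]

end Coordinates

namespace Matrix

theorem trace_mul_eq_sum_sum {m p R : Type*} [Fintype m] [Fintype p]
    [NonUnitalNonAssocSemiring R] (X : Matrix m p R) (Y : Matrix p m R) :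
    (X * Y).trace = ∑ k, ∑ l, X k l * Y l k := by
  simp [trace, mul_apply]

variable {m R : Type*} [Fintype m] [CommRing R]

theorem trace_mul_commutator (X Y Z : Matrix m m R) :
    (Y * (X * Z - Z * X)).trace = -((X * Y - Y * X) * Z).trace := by
  simp only [Matrix.mul_sub, Matrix.sub_mul, trace_sub, ← Matrix.mul_assoc]
  rw [trace_mul_cycle Y Z X]
  ring

theorem trace_mul_self_fin_two (X : Matrix (Fin 2) (Fin 2) R) :
    (X * X).trace = X.trace ^ 2 - 2 * X.det := by
  simp only [trace_fin_two, det_fin_two, mul_apply, Fin.sum_univ_two]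
  ring

end Matrix

section MatrixDerivative

variable {n : ℕ} {i : Fin n} {t : Fin n → ℂ} {m p : Type*} [Fintype m] [Fintype p]

def pderivMatrix (n : ℕ) (i : Fin n) (X : (Fin n → ℂ) → Matrix m p ℂ) (t : Fin n → ℂ) :
    Matrix m p ℂ :=
  Matrix.of fun k l => pderiv n i (fun s => X s k l) t

theorem differentiableAt_trace_mul {X : (Fin n → ℂ) → Matrix m p ℂ}
    {Y : (Fin n → ℂ) → Matrix p m ℂ}
    (hX : ∀ k l, DifferentiableAt ℂ (fun s => X s k l) t)
    (hY : ∀ l k, DifferentiableAt ℂ (fun s => Y s l k) t) :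
    DifferentiableAt ℂ (fun s => (X s * Y s).trace) t := by
  simp only [Matrix.trace_mul_eq_sum_sum]
  fun_prop

theorem pderiv_trace_mul {X : (Fin n → ℂ) → Matrix m p ℂ} {Y : (Fin n → ℂ) → Matrix p m ℂ}
    (hX : ∀ k l, DifferentiableAt ℂ (fun s => X s k l) t)
    (hY : ∀ l k, DifferentiableAt ℂ (fun s => Y s l k) t) :
    pderiv n i (fun s => (X s * Y s).trace) t
      = (pderivMatrix n i X t * Y t).trace + (X t * pderivMatrix n i Y t).trace := by
  simp only [Matrix.trace_mul_eq_sum_sum]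
  rw [pderiv_fun_sum _ fun k _ => by fun_prop]
  simp only [pderivMatrix, Matrix.of_apply, ← sum_add_distrib]
  refine sum_congr rfl fun k _ => ?_
  rw [pderiv_fun_sum _ fun l _ => by fun_prop]
  exact sum_congr rfl fun l _ => pderiv_fun_mul (hX k l) (hY l k)

end MatrixDerivative

section Schlesinger

variable {m : Type*} [Fintype m] {n : ℕ} {A : Fin (n + 2) → (Fin n → ℂ) → Matrix m m ℂ}
  {t : Fin n → ℂ} {i : Fin n}

theorem pderiv_trace_mul_last_of_ne
    (hdiff : ∀ j k l, DifferentiableAt ℂ (fun s => A j s k l) t)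
    (hS1 : ∀ j, j ≠ inc n i → pderivMatrix n i (A j) t
      = (t i - ext n t j)⁻¹ • (A (inc n i) t * A j t - A j t * A (inc n i) t))
    {j : Fin (n + 2)} (hj : j ≠ inc n i) :
    pderiv n i (fun s => (A j s * A (Fin.last (n + 1)) s).trace) t
      = ((t i - ext n t j)⁻¹ - (t i - 1)⁻¹)
        * ((A (inc n i) t * A j t - A j t * A (inc n i) t) * A (Fin.last (n + 1)) t).trace := by
  rw [pderiv_trace_mul (hdiff j) (hdiff _), hS1 j hj, hS1 _ (last_ne_inc i), ext_last,
    Matrix.mul_smul, Matrix.smul_mul, Matrix.trace_smul, Matrix.trace_smul,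
    Matrix.trace_mul_commutator]
  simp only [smul_eq_mul]
  ring

theorem pderiv_trace_mul_last_self
    (hdiff : ∀ j k l, DifferentiableAt ℂ (fun s => A j s k l) t)
    (hS1 : ∀ j, j ≠ inc n i → pderivMatrix n i (A j) t
      = (t i - ext n t j)⁻¹ • (A (inc n i) t * A j t - A j t * A (inc n i) t))
    (hS2 : pderivMatrix n i (A (inc n i)) t
      = ∑ j ∈ univ.filter (fun j => j ≠ inc n i),
          (t i - ext n t j)⁻¹ • (A j t * A (inc n i) t - A (inc n i) t * A j t)) :
    pderiv n i (fun s => (A (inc n i) s * A (Fin.last (n + 1)) s).trace) t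
      = -∑ j, (t i - ext n t j)⁻¹
        * ((A (inc n i) t * A j t - A j t * A (inc n i) t) * A (Fin.last (n + 1)) t).trace := by
  have hAi : pderivMatrix n i (A (inc n i)) t
      = ∑ j, (t i - ext n t j)⁻¹ • (A j t * A (inc n i) t - A (inc n i) t * A j t) := by
    rw [hS2, sum_filter_of_ne fun j _ hj h => by simp [h] at hj]
  have hAi_comm : (A (inc n i) t * (A (inc n i) t * A (Fin.last (n + 1)) t
      - A (Fin.last (n + 1)) t * A (inc n i) t)).trace = 0 := by
    rw [Matrix.trace_mul_commutator, sub_self, Matrix.zero_mul, Matrix.trace_zero, neg_zero]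
  rw [pderiv_trace_mul (hdiff _) (hdiff _), hAi, hS1 _ (last_ne_inc i), Matrix.mul_smul,
    Matrix.trace_smul, hAi_comm, smul_zero, add_zero, Matrix.sum_mul, Matrix.trace_sum,
    ← sum_neg_distrib]
  refine sum_congr rfl fun j _ => ?_
  rw [Matrix.smul_mul, Matrix.trace_smul, ← neg_sub (A (inc n i) t * A j t), Matrix.neg_mul,
    Matrix.trace_neg, smul_eq_mul, mul_neg]

theorem differentiableAt_trace_mul_last_div
    (hdiff : ∀ j k l, DifferentiableAt ℂ (fun s => A j s k l) t) {j : Fin (n + 2)}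
    (hden : ext n t j - 1 ≠ 0) :
    DifferentiableAt ℂ
      (fun s => (A j s * A (Fin.last (n + 1)) s).trace / (ext n s j - 1)) t := by
  simpa only [div_eq_mul_inv] using (differentiableAt_trace_mul (hdiff _) (hdiff _)).fun_mul
    (((differentiable_ext _ _).sub_const 1).fun_inv hden)

theorem pderiv_trace_mul_last_div_of_ne
    (hdiff : ∀ j k l, DifferentiableAt ℂ (fun s => A j s k l) t)
    (hdist : ∀ j k : Fin (n + 2), j ≠ k → ext n t j ≠ ext n t k)
    (hS1 : ∀ j, j ≠ inc n i → pderivMatrix n i (A j) t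
      = (t i - ext n t j)⁻¹ • (A (inc n i) t * A j t - A j t * A (inc n i) t))
    {j : Fin (n + 2)} (hj : j ≠ inc n i) (hjN : j ≠ Fin.last (n + 1)) :
    pderiv n i (fun s => (A j s * A (Fin.last (n + 1)) s).trace / (ext n s j - 1)) t
      = (t i - ext n t j)⁻¹
        * ((A (inc n i) t * A j t - A j t * A (inc n i) t) * A (Fin.last (n + 1)) t).trace
        / (t i - 1) := by
  have hsub : t i - ext n t j ≠ 0 := sub_ne_zero.mpr (by simpa using hdist _ _ hj.symm)
  have hden : ext n t j - 1 ≠ 0 := sub_ne_zero.mpr (by simpa using hdist _ _ hjN)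
  have hti : t i - 1 ≠ 0 := sub_ne_zero.mpr (by simpa using hdist _ _ (last_ne_inc i).symm)
  rw [pderiv_fun_div (differentiableAt_trace_mul (hdiff _) (hdiff _))
    ((differentiable_ext _ _).sub_const 1) hden, pderiv_sub_const, pderiv_ext, if_neg hj,
    pderiv_trace_mul_last_of_ne hdiff hS1 hj]
  field_simp
  ring

theorem pderiv_trace_mul_last_div_inc
    (hdiff : ∀ j k l, DifferentiableAt ℂ (fun s => A j s k l) t) (hti : t i - 1 ≠ 0)
    (hS1 : ∀ j, j ≠ inc n i → pderivMatrix n i (A j) t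
      = (t i - ext n t j)⁻¹ • (A (inc n i) t * A j t - A j t * A (inc n i) t))
    (hS2 : pderivMatrix n i (A (inc n i)) t
      = ∑ j ∈ univ.filter (fun j => j ≠ inc n i),
          (t i - ext n t j)⁻¹ • (A j t * A (inc n i) t - A (inc n i) t * A j t)) :
    pderiv n i (fun s => (A (inc n i) s * A (Fin.last (n + 1)) s).trace
        / (ext n s (inc n i) - 1)) t
      = -(∑ j, (t i - ext n t j)⁻¹
          * ((A (inc n i) t * A j t - A j t * A (inc n i) t) * A (Fin.last (n + 1)) t).trace)
          / (t i - 1)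
        - (A (inc n i) t * A (Fin.last (n + 1)) t).trace / (t i - 1) ^ 2 := by
  rw [pderiv_fun_div (differentiableAt_trace_mul (hdiff _) (hdiff _))
    ((differentiable_ext _ _).sub_const 1) (by rwa [ext_inc]), pderiv_sub_const, pderiv_ext,
    if_pos rfl, pderiv_trace_mul_last_self hdiff hS1 hS2, ext_inc]
  field_simp

theorem pderiv_sum_trace_mul_last_div
    (hdiff : ∀ j k l, DifferentiableAt ℂ (fun s => A j s k l) t)
    (hdist : ∀ j k : Fin (n + 2), j ≠ k → ext n t j ≠ ext n t k)
    (hS1 : ∀ j, j ≠ inc n i → pderivMatrix n i (A j) t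
      = (t i - ext n t j)⁻¹ • (A (inc n i) t * A j t - A j t * A (inc n i) t))
    (hS2 : pderivMatrix n i (A (inc n i)) t
      = ∑ j ∈ univ.filter (fun j => j ≠ inc n i),
          (t i - ext n t j)⁻¹ • (A j t * A (inc n i) t - A (inc n i) t * A j t)) :
    pderiv n i (fun s => ∑ j : Fin (n + 1),
        (A j.castSucc s * A (Fin.last (n + 1)) s).trace / (ext n s j.castSucc - 1)) t
      = -(A (inc n i) t * A (Fin.last (n + 1)) t).trace / (t i - 1) ^ 2 := by
  set N := Fin.last (n + 1)
  set c : Fin (n + 2) → ℂ :=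
    fun j => ((A (inc n i) t * A j t - A j t * A (inc n i) t) * A N t).trace with hc
  have hden (j : Fin (n + 1)) : ext n t j.castSucc - 1 ≠ 0 :=
    sub_ne_zero.mpr (by simpa [N] using hdist _ N (Fin.castSucc_lt_last j).ne)
  have hti : t i - 1 ≠ 0 := by simpa using hden i.castSucc
  have hc_inc : c (inc n i) = 0 := by simp [hc]
  have hc_last : c N = 0 := by
    simp only [hc, Matrix.sub_mul, Matrix.trace_sub, Matrix.mul_assoc]
    rw [Matrix.trace_mul_comm (A N t), Matrix.mul_assoc, sub_self]
  have hoff (j : Fin (n + 1)) (hj : j ∈ univ.erase i.castSucc) :=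
    pderiv_trace_mul_last_div_of_ne hdiff hdist hS1
      (fun h => ne_of_mem_erase hj (Fin.castSucc_injective _ h)) (Fin.castSucc_lt_last j).ne
  calc _ = ∑ j : Fin (n + 1),
          pderiv n i (fun s => (A j.castSucc s * A N s).trace / (ext n s j.castSucc - 1)) t :=
        pderiv_fun_sum _ fun j _ => differentiableAt_trace_mul_last_div hdiff (hden j)
    _ = -(∑ j, (t i - ext n t j)⁻¹ * c j) / (t i - 1)
          - (A (inc n i) t * A N t).trace / (t i - 1) ^ 2
          + ∑ j ∈ univ.erase i.castSucc,
            (t i - ext n t j.castSucc)⁻¹ * c j.castSucc / (t i - 1) := by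
        rw [← add_sum_erase _ _ (mem_univ i.castSucc), sum_congr rfl hoff,
          ← pderiv_trace_mul_last_div_inc hdiff hti hS1 hS2]
        rfl
    _ = -(∑ j, (t i - ext n t j)⁻¹ * c j) / (t i - 1)
          - (A (inc n i) t * A N t).trace / (t i - 1) ^ 2
          + (∑ j, (t i - ext n t j)⁻¹ * c j) / (t i - 1) := by
        rw [sum_erase _ (by simp [← inc_eq_castSucc_castSucc, hc_inc]), ← sum_div,
          Fin.sum_univ_castSucc (fun j => (t i - ext n t j)⁻¹ * c j), hc_last, mul_zero,
          add_zero]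
    _ = _ := by ring

end Schlesinger
theorem sum_mul_sub_one_mul_add_sum_div_eq_neg_sum {n : ℕ} (t : Fin n → ℂ)
    (c : Fin (n + 1) → ℂ) (ht : ∀ q, t q ≠ 1) {F : Fin n → ℂ}
    (hF : ∀ q, F q = -c q.castSucc / (t q - 1) ^ 2) :
    ∑ q, t q * (t q - 1) * F q + ∑ j, c j / (ext n t j.castSucc - 1) = -∑ j, c j := by
  rw [Fin.sum_univ_castSucc c, Fin.sum_univ_castSucc (fun j => c j / _), neg_add,
    ← sum_neg_distrib, ← add_assoc, ← sum_add_distrib]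
  simp only [ext_castSucc_castSucc, ext_castSucc_last, hF]
  congr 1
  · refine sum_congr rfl fun q _ => ?_
    have := sub_ne_zero.mpr (ht q)
    field_simp
    ring
  · ring

theorem neg_sum_trace_mul_last_fin_two {n : ℕ} (B : Fin (n + 2) → Matrix (Fin 2) (Fin 2) ℂ)
    (r θ : ℂ) (hdet : (B (Fin.last (n + 1))).det = 0)
    (hsum : ∑ j, B j = -Matrix.diagonal ![r, r + θ]) :
    -∑ j : Fin (n + 1), (B j.castSucc * B (Fin.last (n + 1))).trace
      = θ * B (Fin.last (n + 1)) 1 1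
        + (B (Fin.last (n + 1))).trace * (r + (B (Fin.last (n + 1))).trace) := by
  have hsum' : ∑ j : Fin (n + 1), B j.castSucc = -Matrix.diagonal ![r, r + θ] - B (Fin.last _) :=
    eq_sub_of_add_eq ((Fin.sum_univ_castSucc B).symm.trans hsum)
  have hD : (Matrix.diagonal ![r, r + θ] * B (Fin.last (n + 1))).trace
      = r * B (Fin.last (n + 1)) 0 0 + (r + θ) * B (Fin.last (n + 1)) 1 1 := by
    simp [Matrix.trace_fin_two, Matrix.diagonal_mul]
  rw [← Matrix.trace_sum, ← Matrix.sum_mul, hsum', Matrix.sub_mul, Matrix.trace_sub,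
    Matrix.neg_mul, Matrix.trace_neg, hD, Matrix.trace_mul_self_fin_two, hdet,
    Matrix.trace_fin_two]
  ring

/-- With `δ = Σᵢ tᵢ(tᵢ − 1) ∂/∂tᵢ`:
`(δ + 1)(Σ_{j=1}^{n+1} tr(A_j A_{n+2})/(t_j − 1)) = θ_{n+3} d_{n+2} + θ_{n+2}(ρ + θ_{n+2})`,
where `d_{n+2}` is the `(2,2)`-entry of `A_{n+2}`. -/
theorem delta_trace_sum
    (n : ℕ) (θ : Fin (n + 3) → ℂ)
    (U : Set (Fin n → ℂ)) (hU : IsOpen U)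
    (A : Fin (n + 2) → (Fin n → ℂ) → Matrix (Fin 2) (Fin 2) ℂ)
    (hdist : ∀ t ∈ U, ∀ j k : Fin (n + 2), j ≠ k → ext n t j ≠ ext n t k)
    (hHol : ∀ (j : Fin (n + 2)) (k l : Fin 2),
      DifferentiableOn ℂ (fun s => A j s k l) U)
    (hdet : ∀ t ∈ U, ∀ j, (A j t).det = 0)
    (htr : ∀ t ∈ U, ∀ j : Fin (n + 2), (A j t).trace = θ (Fin.castSucc j))
    (hsum : ∀ t ∈ U, ∑ j, A j t =
      -Matrix.diagonal ![rho n θ, rho n θ + θ (Fin.last (n + 2))])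
    (hSch1 : ∀ t ∈ U, ∀ (i : Fin n) (j : Fin (n + 2)), j ≠ inc n i →
      ∀ (k l : Fin 2),
        pderiv n i (fun s => A j s k l) t
          = ((t i - ext n t j)⁻¹ •
              (A (inc n i) t * A j t - A j t * A (inc n i) t)) k l)
    (hSch2 : ∀ t ∈ U, ∀ (i : Fin n) (k l : Fin 2),
      pderiv n i (fun s => A (inc n i) s k l) t
        = ∑ j ∈ Finset.univ.filter (fun j => j ≠ inc n i),
            ((t i - ext n t j)⁻¹ •
              (A j t * A (inc n i) t - A (inc n i) t * A j t)) k l)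
    :
    ∀ t ∈ U,
      (∑ i, t i * (t i - 1) *
          pderiv n i (fun s => ∑ j : Fin (n + 1),
            (A (Fin.castLE (by omega) j) s * A ⟨n + 1, by omega⟩ s).trace
              / (ext n s (Fin.castLE (by omega) j) - 1)) t)
        + (∑ j : Fin (n + 1),
            (A (Fin.castLE (by omega) j) t * A ⟨n + 1, by omega⟩ t).trace
              / (ext n t (Fin.castLE (by omega) j) - 1))
        = θ (Fin.last (n + 2)) * A ⟨n + 1, by omega⟩ t 1 1
            + θ ⟨n + 1, by omega⟩ * (rho n θ + θ ⟨n + 1, by omega⟩) := by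
  intro t ht
  have hdiff (j : Fin (n + 2)) (k l : Fin 2) : DifferentiableAt ℂ (fun s => A j s k l) t :=
    (hHol j k l).differentiableAt (hU.mem_nhds ht)
  have ht1 (q : Fin n) : t q ≠ 1 := by
    simpa using hdist t ht (inc n q) (Fin.last (n + 1)) (last_ne_inc q).symm
  have hθ : θ ⟨n + 1, by omega⟩ = (A (Fin.last (n + 1)) t).trace :=
    (htr t ht (Fin.last (n + 1))).symm
  rw [hθ]
  have hS1 (i : Fin n) (j : Fin (n + 2)) (hj : j ≠ inc n i) : pderivMatrix n i (A j) t = _ :=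
    Matrix.ext (hSch1 t ht i j hj)
  have hS2 (i : Fin n) : pderivMatrix n i (A (inc n i)) t = _ :=
    Matrix.ext fun k l => (hSch2 t ht i k l).trans (Matrix.sum_apply k l _ _).symm
  -- `Fin.castLE _ j` and `⟨n + 1, _⟩` are definitionally `j.castSucc` and `Fin.last (n + 1)`.
  exact (sum_mul_sub_one_mul_add_sum_div_eq_neg_sum t _ ht1 fun i =>
      pderiv_sum_trace_mul_last_div hdiff (hdist t ht) (hS1 i) (hS2 i)).trans
    (neg_sum_trace_mul_last_fin_two (A · t) _ _ (hdet t ht _) (hsum t ht))
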